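/- The set of triples u = (r,c,s) with r,c ∈ ℤ and 2s ∈ ℤ such that: (i) ν(1/6, −5/6, r, c, s) = ν(1/6, −5/6, 3, 0, −1); (ii) 0 < c + (5/6)r < 5/2; (iii) 0 ≤ c² − 2rs and 0 ≤ c² − 2(3−r)(−1−s), with both strictly less than 6; is exactly the following list of twelve triples: (−1,1,−1/2), (−2,2,−1), (−3,3,−3/2), (−4,4,−2), (−5,5,−5/2), (−6,6,−3), (4,−1,−1/2), (5,−2,0), (6,−3,1/2), (7,−4,1), (8,−5,3/2), (9,−6,2). -/
import Mathlib

set_option maxHeartbeats 2000000 in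
/-- Classification of the classes defining the wall `W₀` at `(α,β) = (1/6,−5/6)`:
the set of triples `(r,c,s)` with `r, c ∈ ℤ`, `2s ∈ ℤ`, equal tilt slope with
`(3,0,−1)`, `0 < c + (5/6)r < 5/2`, and both (normalized) discriminants in
`[0, 6)`, is exactly the given list of twelve triples. -/
theorem stmt_12 :
    let ν : ℚ → ℚ → ℚ → ℚ → ℚ → ℚ :=
      fun α β r c s => (s - β*c + (β^2/2)*r - (α^2/2)*r) / (c - β*r)
    {u : ℤ × ℤ × ℚ |
        (∃ m : ℤ, (m:ℚ) = 2*u.2.2) ∧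
        ν (1/6) (-5/6) (u.1:ℚ) (u.2.1:ℚ) u.2.2 = ν (1/6) (-5/6) 3 0 (-1) ∧
        0 < (u.2.1:ℚ) + (5/6)*(u.1:ℚ) ∧ (u.2.1:ℚ) + (5/6)*(u.1:ℚ) < 5/2 ∧
        0 ≤ (u.2.1:ℚ)^2 - 2*(u.1:ℚ)*u.2.2 ∧
        (u.2.1:ℚ)^2 - 2*(u.1:ℚ)*u.2.2 < 6 ∧
        0 ≤ (u.2.1:ℚ)^2 - 2*(3-(u.1:ℚ))*(-1-u.2.2) ∧
        (u.2.1:ℚ)^2 - 2*(3-(u.1:ℚ))*(-1-u.2.2) < 6}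
    = ({(-1, 1, -1/2), (-2, 2, -1), (-3, 3, -3/2), (-4, 4, -2),
        (-5, 5, -5/2), (-6, 6, -3), (4, -1, -1/2), (5, -2, 0),
        (6, -3, 1/2), (7, -4, 1), (8, -5, 3/2), (9, -6, 2)} :
        Set (ℤ × ℤ × ℚ)) := by
  intro ν
  ext ⟨r, c, s⟩
  simp only [Set.mem_setOf_eq, Set.mem_insert_iff, Set.mem_singleton_iff, Prod.mk.injEq, ν]
  constructor
  · rintro ⟨⟨m, hm⟩, hν, h1, h2, hd1, hd2, hd3, hd4⟩
    have hden : (c:ℚ) - (-5/6)*r ≠ 0 := by intro h; rw [sub_eq_zero] at h; nlinarith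
    rw [div_eq_div_iff hden (by norm_num)] at hν
    have hs : s = -(5*(c:ℚ)+2*r)/6 := by linarith [hν]
    subst hs
    have h3m : (3*m : ℤ) = -(5*c+2*r) := by
      have : (3*(m:ℚ)) = -(5*(c:ℚ)+2*(r:ℚ)) := by rw [hm]; ring
      exact_mod_cast this
    obtain ⟨k, hk⟩ : (3:ℤ) ∣ (c + r) := by omega
    have hkQ : (c:ℚ) + r = 3*k := by exact_mod_cast hk
    have key1 : ((k*(3*c+2*r) : ℤ) : ℚ) = (c:ℚ)^2 - 2*(r:ℚ)*(-(5*(c:ℚ)+2*r)/6) := by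
      push_cast
      linear_combination (-(3*(c:ℚ)+2*r)/3) * hkQ
    have key2 : (((k-1)*((3*c+2*r)-6) : ℤ) : ℚ)
        = (c:ℚ)^2 - 2*(3-(r:ℚ))*(-1-(-(5*(c:ℚ)+2*r)/6)) := by
      push_cast
      linear_combination (-(3*(c:ℚ)+2*r-6)/3) * hkQ
    have HD1 : (0:ℤ) ≤ k*(3*c+2*r) := by exact_mod_cast key1 ▸ hd1
    have HD2 : (k*(3*c+2*r):ℤ) < 6 := by exact_mod_cast key1 ▸ hd2
    have HD3 : (0:ℤ) ≤ (k-1)*((3*c+2*r)-6) := by exact_mod_cast key2 ▸ hd3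
    have HD4 : ((k-1)*((3*c+2*r)-6):ℤ) < 6 := by exact_mod_cast key2 ▸ hd4
    have H1 : (0:ℤ) < 6*c + 5*r := by
      have : (0:ℚ) < 6*c + 5*r := by linarith
      exact_mod_cast this
    have H2 : (6*c + 5*r : ℤ) < 15 := by
      have : (6*(c:ℚ) + 5*r) < 15 := by linarith
      exact_mod_cast this
    clear hν hd1 hd2 hd3 hd4 hm h1 h2 hden key1 key2 h3m
    have hk01 : k = 0 ∨ k = 1 := by
      rcases lt_trichotomy k 0 with hkn | rfl | hkp
      · exfalso; nlinarith
      · left; rfl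
      · right
        by_contra hne
        have hk2 : 2 ≤ k := by omega
        have hbnn : 0 ≤ 3*c+2*r := by nlinarith
        have hble : 3*c+2*r ≤ 2 := by nlinarith
        nlinarith
    rcases hk01 with rfl | rfl
    · replace HD3 : 0 ≤ -((3*c+2*r)-6) := by linarith
      have hr : r = -c := by omega
      subst hr
      have hc1 : 1 ≤ c := by omega
      have hc2 : c ≤ 6 := by omega
      clear HD1 HD2 HD4 H1 H2 hk HD3 hkQ
      interval_cases c <;> norm_num
    · replace HD1 : (0:ℤ) ≤ 3*c+2*r := by linarith
      replace HD2 : (3*c+2*r:ℤ) < 6 := by linarith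
      have hr : r = 3-c := by omega
      subst hr
      have hc1 : -6 ≤ c := by omega
      have hc2 : c ≤ -1 := by omega
      clear HD1 HD2 HD3 HD4 H1 H2 hk hkQ
      interval_cases c <;> norm_num
  · rintro (⟨rfl, rfl, rfl⟩|⟨rfl, rfl, rfl⟩|⟨rfl, rfl, rfl⟩|⟨rfl, rfl, rfl⟩|⟨rfl, rfl, rfl⟩|
      ⟨rfl, rfl, rfl⟩|⟨rfl, rfl, rfl⟩|⟨rfl, rfl, rfl⟩|⟨rfl, rfl, rfl⟩|⟨rfl, rfl, rfl⟩|
      ⟨rfl, rfl, rfl⟩|⟨rfl, rfl, rfl⟩)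
    · exact ⟨⟨-1, by norm_num⟩, by norm_num⟩
    · exact ⟨⟨-2, by norm_num⟩, by norm_num⟩
    · exact ⟨⟨-3, by norm_num⟩, by norm_num⟩
    · exact ⟨⟨-4, by norm_num⟩, by norm_num⟩
    · exact ⟨⟨-5, by norm_num⟩, by norm_num⟩
    · exact ⟨⟨-6, by norm_num⟩, by norm_num⟩
    · exact ⟨⟨-1, by norm_num⟩, by norm_num⟩
    · exact ⟨⟨0, by norm_num⟩, by norm_num⟩
    · exact ⟨⟨1, by norm_num⟩, by norm_num⟩
    · exact ⟨⟨2, by norm_num⟩, by norm_num⟩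
    · exact ⟨⟨3, by norm_num⟩, by norm_num⟩
    · exact ⟨⟨4, by norm_num⟩, by norm_num⟩
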